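/- (Lower bound for the regenerative numerator) For any nonnegative function r : S → ℝ₊, the quantity κ̲(r) = r(z) + ν̃ (I − B̃)^{-1} r̃, where r̃ is r restricted to A', satisfies κ̲(r) = E_z[ ∑_{j=0}^{(τ(z)∧T)−1} r(X_j) ] ≤ E_z[ ∑_{j=0}^{τ(z)−1} r(X_j) ]. In particular, with r = 1, κ̲(e) = 1 + ν̃ (I − B̃)^{-1} ẽ ≤ E_z[τ(z)]. -/

import Mathlib

open MeasureTheory ENNReal Filter

noncomputable section

namespace MCTrunc

variable {S : Type*}

/-- `P` is a (row-)stochastic matrix on the state space `S`: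
nonnegative entries and rows summing to one. -/
def IsStochasticMatrix (P : S → S → ℝ) : Prop :=
  (∀ x y, 0 ≤ P x y) ∧ ∀ x, HasSum (fun y => P x y) 1

open scoped Classical in
/-- `n`-step transition probabilities associated with `P`. -/
def stepIter (P : S → S → ℝ) : ℕ → S → S → ℝ
  | 0 => fun x y => if x = y then 1 else 0
  | n + 1 => fun x y => ∑' w, stepIter P n x w * P w y

/-- Irreducibility of the transition matrix `P`. -/
def IsIrreducibleMatrix (P : S → S → ℝ) : Prop :=
  ∀ x y, ∃ n : ℕ, 0 < stepIter P n x y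

/-- `μ x` is the law of the Markov chain with one-step transition matrix `P`
started at `x`, specified through its finite-dimensional distributions. -/
def IsMarkovChain [MeasurableSpace S] (P : S → S → ℝ) (μ : S → Measure (ℕ → S)) : Prop :=
  (∀ x, IsProbabilityMeasure (μ x)) ∧
  ∀ (n : ℕ) (path : ℕ → S),
    μ (path 0) {ω | ∀ i ≤ n, ω i = path i} =
      ENNReal.ofReal (∏ i ∈ Finset.range n, P (path i) (path (i + 1)))

/-- First hitting time `inf {n ≥ 0 : X_n ∈ C}`, valued in `ℕ∞`. -/
def hitTime (C : Set S) (ω : ℕ → S) : ℕ∞ :=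
  sInf {m : ℕ∞ | ∃ n : ℕ, m = n ∧ ω n ∈ C}

/-- First hitting time of `C` strictly after time `θ`:
`inf {n : θ < n, X_n ∈ C}`. -/
def hitTimeAfter (C : Set S) (θ : ℕ∞) (ω : ℕ → S) : ℕ∞ :=
  sInf {m : ℕ∞ | ∃ n : ℕ, m = n ∧ θ < (n : ℕ∞) ∧ ω n ∈ C}

/-- First return time `τ(z) = inf {n ≥ 1 : X_n = z}`. -/
def retTime (z : S) (ω : ℕ → S) : ℕ∞ :=
  sInf {m : ℕ∞ | ∃ n : ℕ, m = n ∧ 1 ≤ n ∧ ω n = z}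

open scoped Classical in
/-- `∑_{a ≤ j < b} r(X_j)` along the path `ω`, valued in `ℝ≥0∞`. -/
def sumOver (r : S → ℝ) (a b : ℕ∞) (ω : ℕ → S) : ℝ≥0∞ :=
  ∑' j : ℕ, if a ≤ (j : ℕ∞) ∧ (j : ℕ∞) < b then ENNReal.ofReal (r (ω j)) else 0

/-- `∑_{0 ≤ j < b} r(X_j)` along the path `ω`. -/
def sumBefore (r : S → ℝ) (b : ℕ∞) (ω : ℕ → S) : ℝ≥0∞ := sumOver r 0 b ω

/-- The chain is positive recurrent: from every state, the expected return time
to that state is finite. -/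
def IsPositiveRecurrent [MeasurableSpace S] (μ : S → Measure (ℕ → S)) : Prop :=
  ∀ x : S, ∫⁻ ω, sumBefore (fun _ => 1) (retTime x ω) ω ∂ μ x < ⊤

/-- The chain is recurrent: every state is revisited almost surely. -/
def IsRecurrent [MeasurableSpace S] (μ : S → Measure (ℕ → S)) : Prop :=
  ∀ x : S, μ x {ω | retTime x ω < ⊤} = 1

variable [DecidableEq S]

/-- The substochastic matrix `B̃ = (P(x,y) : x, y ∈ A' = A \ {z})`. -/
def trB (P : S → S → ℝ) (z : S) (A : Finset S) :
    Matrix ↥(A.erase z) ↥(A.erase z) ℝ :=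
  Matrix.of fun x y => P x y

/-- The row vector `ν̃ = (P(z,x) : x ∈ A')`. -/
def trNu (P : S → S → ℝ) (z : S) (A : Finset S) : ↥(A.erase z) → ℝ := fun x => P z x

/-- The column vector `p̃ = (P(x,z) : x ∈ A')`. -/
def trCol (P : S → S → ℝ) (z : S) (A : Finset S) : ↥(A.erase z) → ℝ := fun x => P x z

/-- The all-ones column vector `ẽ` on `A'`. -/
def trE (z : S) (A : Finset S) : ↥(A.erase z) → ℝ := fun _ => 1

/-- Restriction of `f : S → ℝ` to `A' = A \ {z}`. -/
def trRes (f : S → ℝ) (z : S) (A : Finset S) : ↥(A.erase z) → ℝ := fun x => f x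

/-- The truncation approximation `π̃` to the stationary distribution:
`π̃(x) = (ν̃ (I - B̃)⁻¹)(x) / (1 + ν̃ (I - B̃)⁻¹ ẽ)` for `x ∈ A'`,
`π̃(z) = (1 + ν̃ (I - B̃)⁻¹ ẽ)⁻¹`, and `π̃ = 0` off `A`. -/
def trPi (P : S → S → ℝ) (z : S) (A : Finset S) (x : S) : ℝ :=
  let row := Matrix.vecMul (trNu P z A) (1 - trB P z A)⁻¹
  let D : ℝ := 1 + dotProduct row (trE z A)
  if x = z then 1 / D
  else if hx : x ∈ A.erase z then row ⟨x, hx⟩ / D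
  else 0

/-- `max {|v x| : x ∈ T}` (as a supremum). -/
def supOn {ι : Type*} (T : Set ι) (v : ι → ℝ) : ℝ := sSup ((fun x => |v x|) '' T)

/-- `min {v x : x ∈ T}` (as an infimum). -/
def infOn {ι : Type*} (T : Set ι) (v : ι → ℝ) : ℝ := sInf (v '' T)

/-- The excursion times `Γ_i`: `Γ_0 = 0`, `Γ_i = inf {n > T_i : X_n ∈ K}` where
`T_1 = inf {n ≥ 0 : X_n ∈ A^c}` and `T_{i+1} = inf {n > Γ_i : X_n ∈ A^c}`. -/
def excGamma (Acomp K : Set S) (ω : ℕ → S) : ℕ → ℕ∞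
  | 0 => 0
  | 1 => hitTimeAfter K (hitTime Acomp ω) ω
  | i + 2 => hitTimeAfter K (hitTimeAfter Acomp (excGamma Acomp K ω (i + 1)) ω) ω

/-- `N = inf {n ≥ 1 : τ(z) < Γ_n}`. -/
def excN (z : S) (Acomp K : Set S) (ω : ℕ → S) : ℕ∞ :=
  sInf {m : ℕ∞ | ∃ n : ℕ, m = n ∧ 1 ≤ n ∧ retTime z ω < excGamma Acomp K ω n}

/-- Entries of the powers `B^n` of the taboo matrix `B = (P(x,y) : x,y ∈ S \ {z})`,
valued in `ℝ≥0∞`. -/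
def tabooPow (P : S → S → ℝ) (z : S) : ℕ → S → S → ℝ≥0∞
  | 0 => fun x y => if x = y then 1 else 0
  | n + 1 => fun x y =>
      ∑' w : S, if w = z then 0 else tabooPow P z n x w * ENNReal.ofReal (P w y)

end MCTrunc

/-!
Under `μ z` the chain starts at `z ∈ A`, so a time `n + 1` lies before `τ(z) ∧ T` exactly when
`X₁, …, X_{n+1}` all lie in `A' = A \ {z}`. By the Markov property the path
`(X₁, …, X_{n+1}) = y` has probability `P(z, y₀) ∏ P(yᵢ, yᵢ₊₁)`, so the expected reward
collected at time `n + 1` is the path sum `ν̃ B̃ⁿ r̃`. Summing over `n` and using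
`(I - B̃)⁻¹ = ∑ B̃ⁿ` gives `κ̲(r)`; the inequality is monotonicity of `∑_{j < b} r(X_j)` in `b`,
and `r = 1` gives the bound on `E_z[τ(z)]`.
-/

theorem ENat.natCast_lt_sInf_iff {T : Set ℕ∞} {j : ℕ} :
    (j : ℕ∞) < sInf T ↔ ∀ m ∈ T, (j : ℕ∞) < m := by
  simp_rw [← ENat.add_one_le_iff (ENat.natCast_ne_top j), le_sInf_iff]

theorem HasSum.vecMul_dotProduct {ι : Type*} [Fintype ι] {f : ℕ → Matrix ι ι ℝ}
    {N : Matrix ι ι ℝ} (hf : HasSum f N) (ν h : ι → ℝ) :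
    HasSum (fun n => Matrix.vecMul ν (f n) ⬝ᵥ h) (Matrix.vecMul ν N ⬝ᵥ h) :=
  hf.map (AddMonoidHom.mk' (fun M => Matrix.vecMul ν M ⬝ᵥ h) fun M N => by
    rw [Matrix.vecMul_add, add_dotProduct])
    (show Continuous fun M : Matrix ι ι ℝ => Matrix.vecMul ν M ⬝ᵥ h by fun_prop)

theorem Matrix.sum_paths_mul_prod_mul {ι R : Type*} [Fintype ι] [DecidableEq ι] [CommSemiring R]
    (M : Matrix ι ι R) (h : ι → R) (n : ℕ) (ν : ι → R) :
    ∑ y : Fin (n + 1) → ι,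
        ν (y 0) * (∏ i : Fin n, M (y i.castSucc) (y i.succ)) * h (y (Fin.last n))
      = Matrix.vecMul ν (M ^ n) ⬝ᵥ h := by
  induction n generalizing ν with
  | zero =>
    rw [← (Equiv.funUnique (Fin 1) ι).symm.sum_comp]
    simp [dotProduct]
  | succ n ih =>
    rw [← (Fin.consEquiv fun _ => ι).sum_comp, Fintype.sum_prod_type, Finset.sum_comm]
    simp only [Fin.consEquiv_apply, Fin.prod_univ_succ, Fin.cons_zero, Fin.cons_succ,
      ← Fin.succ_castSucc, ← Fin.succ_last, Fin.castSucc_zero]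
    calc _ = ∑ y : Fin (n + 1) → ι, Matrix.vecMul ν M (y 0) *
            (∏ i : Fin n, M (y i.castSucc) (y i.succ)) * h (y (Fin.last n)) :=
          Finset.sum_congr rfl fun y _ => by
            simp only [Matrix.vecMul, dotProduct, Finset.sum_mul, mul_assoc]
      _ = Matrix.vecMul ν (M ^ (n + 1)) ⬝ᵥ h := by
        rw [ih, Matrix.vecMul_vecMul, ← pow_succ']

namespace MCTrunc

section Paths

variable {S : Type*}

lemma natCast_lt_hitTime_iff {C : Set S} {ω : ℕ → S} {j : ℕ} :
    (j : ℕ∞) < hitTime C ω ↔ ∀ i ≤ j, ω i ∉ C := by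
  rw [hitTime, ENat.natCast_lt_sInf_iff]
  simp only [Set.mem_ofPred_eq, forall_exists_index, and_imp, forall_comm (α := ℕ∞), forall_eq,
    ← not_le, Nat.cast_le]
  exact forall_congr' fun i => imp_not_comm

lemma natCast_lt_retTime_iff {z : S} {ω : ℕ → S} {j : ℕ} :
    (j : ℕ∞) < retTime z ω ↔ ∀ i, 1 ≤ i → i ≤ j → ω i ≠ z := by
  rw [retTime, ENat.natCast_lt_sInf_iff]
  simp only [Set.mem_ofPred_eq, forall_exists_index, and_imp, forall_comm (α := ℕ∞), forall_eq,
    ← not_le, Nat.cast_le]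
  exact forall_congr' fun i => imp_congr_right fun _ => imp_not_comm

lemma natCast_lt_min_retTime_hitTime_iff {z : S} {A : Set S} {ω : ℕ → S} {j : ℕ} :
    (j : ℕ∞) < min (retTime z ω) (hitTime Aᶜ ω) ↔ ∀ i ≤ j, ω i ∈ A ∧ (i ≠ 0 → ω i ≠ z) := by
  simp only [lt_min_iff, natCast_lt_retTime_iff, natCast_lt_hitTime_iff, Set.mem_compl_iff,
    not_not, Nat.one_le_iff_ne_zero]
  grind

lemma lintegral_sumBefore_mono [MeasurableSpace S] (r : S → ℝ) {a b : (ℕ → S) → ℕ∞}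
    (hab : ∀ ω, a ω ≤ b ω) (ν : Measure (ℕ → S)) :
    ∫⁻ ω, sumBefore r (a ω) ω ∂ν ≤ ∫⁻ ω, sumBefore r (b ω) ω ∂ν := by
  refine lintegral_mono fun ω => ENNReal.tsum_le_tsum fun j => ?_
  split_ifs with ha hb
  · exact le_rfl
  · exact absurd ⟨ha.1, ha.2.trans_le (hab ω)⟩ hb
  · exact zero_le
  · exact le_rfl

variable [DecidableEq S]

def rewardIfInside (D : Finset S) (r : S → ℝ) (n : ℕ) (y : Fin (n + 1) → S) : ℝ≥0∞ :=
  if ∀ i, y i ∈ D then ENNReal.ofReal (r (y (Fin.last n))) else 0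

lemma sumBefore_min_retTime_hitTime (r : S → ℝ) {z : S} {A : Finset S} {ω : ℕ → S}
    (h0 : ω 0 ∈ A) :
    sumBefore r (min (retTime z ω) (hitTime (↑A)ᶜ ω)) ω
      = ENNReal.ofReal (r (ω 0)) + ∑' n, rewardIfInside (A.erase z) r n fun i => ω (i + 1) := by
  have start : ((0 : ℕ) : ℕ∞) < min (retTime z ω) (hitTime (↑A)ᶜ ω) :=
    natCast_lt_min_retTime_hitTime_iff.2 fun i hi => by
      obtain rfl := Nat.le_zero.1 hi
      exact ⟨h0, absurd rfl⟩
  have later (n : ℕ) : ((n + 1 : ℕ) : ℕ∞) < min (retTime z ω) (hitTime (↑A)ᶜ ω) ↔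
      ∀ i : Fin (n + 1), ω (i + 1) ∈ A.erase z := by
    simp only [natCast_lt_min_retTime_hitTime_iff, Finset.mem_erase, Finset.mem_coe]
    constructor
    · intro h i
      have hi := h (i + 1) (by omega)
      exact ⟨hi.2 (by omega), hi.1⟩
    · rintro h (_ | k) hk
      · exact ⟨h0, absurd rfl⟩
      · exact ⟨(h ⟨k, by omega⟩).2, fun _ => (h ⟨k, by omega⟩).1⟩
  rw [sumBefore, sumOver, tsum_eq_zero_add' ENNReal.summable, if_pos ⟨le_rfl, start⟩]
  congr 1
  refine tsum_congr fun n => ?_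
  simp only [rewardIfInside, zero_le, true_and, later, Fin.val_last]

end Paths

section MarkovChain

variable {S : Type*}

def pathProb (P : S → S → ℝ) (z : S) {n : ℕ} (y : Fin (n + 1) → S) : ℝ :=
  P z (y 0) * ∏ i : Fin n, P (y i.castSucc) (y i.succ)

lemma tsum_rewardIfInside_mul_pathProb [DecidableEq S] {P : S → S → ℝ} (hP : ∀ x y, 0 ≤ P x y)
    {r : S → ℝ} (hr : ∀ x, 0 ≤ r x) (z : S) (A : Finset S) (n : ℕ) :
    ∑' y : Fin (n + 1) → S, rewardIfInside (A.erase z) r n y * ENNReal.ofReal (pathProb P z y)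
      = ENNReal.ofReal (Matrix.vecMul (trNu P z A) (trB P z A ^ n) ⬝ᵥ trRes r z A) := by
  let e : (Fin (n + 1) → A.erase z) → Fin (n + 1) → S := fun y i => y i
  have he : Function.Injective e := fun y y' h => funext fun i => Subtype.ext (congrFun h i)
  have hsupp : Function.support (fun y =>
      rewardIfInside (A.erase z) r n y * ENNReal.ofReal (pathProb P z y)) ⊆ Set.range e := by
    intro y hy
    by_cases hin : ∀ i, y i ∈ A.erase z
    · exact ⟨fun i => ⟨y i, hin i⟩, rfl⟩
    · exact (hy (by simp only [rewardIfInside, if_neg hin, zero_mul])).elim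
  calc ∑' y, rewardIfInside (A.erase z) r n y * ENNReal.ofReal (pathProb P z y)
      = ∑ y : Fin (n + 1) → A.erase z, ENNReal.ofReal (trNu P z A (y 0) *
          (∏ i : Fin n, trB P z A (y i.castSucc) (y i.succ)) * trRes r z A (y (Fin.last n))) := by
        rw [← he.tsum_eq hsupp, tsum_fintype]
        refine Finset.sum_congr rfl fun y _ => ?_
        simp only [rewardIfInside, e, Finset.coe_mem, implies_true, if_true]
        rw [← ENNReal.ofReal_mul (hr _), mul_comm]
        rfl
    _ = _ := by
        rw [← Matrix.sum_paths_mul_prod_mul]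
        exact (ENNReal.ofReal_sum_of_nonneg fun y _ => mul_nonneg
          (mul_nonneg (hP _ _) (Finset.prod_nonneg fun i _ => hP _ _)) (hr _)).symm

variable [MeasurableSpace S] [MeasurableSingletonClass S] {P : S → S → ℝ}
  {μ : S → Measure (ℕ → S)}

lemma IsMarkovChain.ae_start (hμ : IsMarkovChain P μ) (z : S) : ∀ᵐ ω ∂μ z, ω 0 = z := by
  have h := hμ.2 0 fun _ => z
  simp only [nonpos_iff_eq_zero, forall_eq, Finset.range_zero, Finset.prod_empty,
    ENNReal.ofReal_one] at h
  have := hμ.1 z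
  have hmeas : MeasurableSet {ω : ℕ → S | ω 0 = z} :=
    (measurableSet_singleton z).preimage (measurable_pi_apply 0)
  exact ae_iff.2 <| (prob_compl_eq_zero_iff hmeas).2 h

lemma IsMarkovChain.measure_shift_cylinder (hμ : IsMarkovChain P μ) (z : S) {n : ℕ}
    (y : Fin (n + 1) → S) :
    μ z {ω | ∀ i : Fin (n + 1), ω (i + 1) = y i} = ENNReal.ofReal (pathProb P z y) := by
  let p : ℕ → S
    | 0 => z
    | k + 1 => if h : k < n + 1 then y ⟨k, h⟩ else z
  have hp (i : Fin (n + 1)) : p (i + 1) = y i := dif_pos i.isLt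
  have hset : {ω : ℕ → S | ∀ i ≤ n + 1, ω i = p i}
      = {ω | ∀ i : Fin (n + 1), ω (i + 1) = y i} ∩ {ω | ω 0 = z} := by
    ext ω
    simp only [Set.mem_ofPred_eq, Set.mem_inter_iff]
    constructor
    · intro h
      exact ⟨fun i => (h (i + 1) (by omega)).trans (hp i), h 0 (by omega)⟩
    · rintro ⟨h, h0⟩ (_ | k) hk
      · exact h0
      · exact (h ⟨k, by omega⟩).trans (hp ⟨k, by omega⟩).symm
  have hprod : ∏ k ∈ Finset.range (n + 1), P (p k) (p (k + 1)) = pathProb P z y := by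
    rw [← Fin.prod_univ_eq_prod_range (fun k => P (p k) (p (k + 1))), Fin.prod_univ_succ]
    exact congr_arg₂ (P z · * ·) (hp 0)
      (Finset.prod_congr rfl fun i _ => congr_arg₂ P (hp i.castSucc) (hp i.succ))
  rw [← measure_inter_conull (hμ.ae_start z), ← hset, ← hprod]
  exact hμ.2 (n + 1) p

variable [Countable S]

lemma IsMarkovChain.lintegral_comp_shift (hμ : IsMarkovChain P μ) (z : S) {n : ℕ}
    (g : (Fin (n + 1) → S) → ℝ≥0∞) :
    ∫⁻ ω, g (fun i => ω (i + 1)) ∂μ z = ∑' y, g y * ENNReal.ofReal (pathProb P z y) := by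
  have hmeas : Measurable fun (ω : ℕ → S) (i : Fin (n + 1)) => ω (i + 1) := by fun_prop
  rw [← lintegral_map (measurable_of_countable g) hmeas, lintegral_countable']
  refine tsum_congr fun y => ?_
  rw [Measure.map_apply hmeas (measurableSet_singleton y), ← hμ.measure_shift_cylinder z y]
  congr 2
  ext ω
  simp [funext_iff]

variable [DecidableEq S] {z : S} {A : Finset S}

lemma lintegral_sumBefore_min_retTime_hitTime (hP : IsStochasticMatrix P)
    (hμ : IsMarkovChain P μ) (hzA : z ∈ A)
    (hsum : ∀ x y : ↥(A.erase z),
      HasSum (fun j : ℕ => ((trB P z A) ^ j) x y) ((1 - trB P z A)⁻¹ x y))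
    {r : S → ℝ} (hr : ∀ x, 0 ≤ r x) :
    ∫⁻ ω, sumBefore r (min (retTime z ω) (hitTime (↑A)ᶜ ω)) ω ∂μ z
      = ENNReal.ofReal (r z + Matrix.vecMul (trNu P z A) (1 - trB P z A)⁻¹ ⬝ᵥ trRes r z A) := by
  have hB : HasSum (fun n => trB P z A ^ n) (1 - trB P z A)⁻¹ :=
    Pi.hasSum.2 fun x => Pi.hasSum.2 (hsum x)
  have hc := hB.vecMul_dotProduct (trNu P z A) (trRes r z A)
  have hc0 (n : ℕ) : 0 ≤ Matrix.vecMul (trNu P z A) (trB P z A ^ n) ⬝ᵥ trRes r z A :=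
    dotProduct_nonneg_of_nonneg (fun j => dotProduct_nonneg_of_nonneg (fun _ => hP.1 _ _)
      fun i => Matrix.pow_apply_nonneg (fun _ _ => hP.1 _ _) n i j) fun _ => hr _
  have hmeas (n : ℕ) : Measurable fun ω : ℕ → S =>
      rewardIfInside (A.erase z) r n fun i => ω (i + 1) :=
    (measurable_of_countable (rewardIfInside (A.erase z) r n)).comp (by fun_prop)
  have := hμ.1 z
  calc ∫⁻ ω, sumBefore r (min (retTime z ω) (hitTime (↑A)ᶜ ω)) ω ∂μ z
      = ∫⁻ ω, ENNReal.ofReal (r z) +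
          ∑' n, rewardIfInside (A.erase z) r n (fun i => ω (i + 1)) ∂μ z :=
        lintegral_congr_ae <| (hμ.ae_start z).mono fun ω h0 => by
          simp only [sumBefore_min_retTime_hitTime r (h0 ▸ hzA), h0]
    _ = ENNReal.ofReal (r z) + ∑' n, ENNReal.ofReal
          (Matrix.vecMul (trNu P z A) (trB P z A ^ n) ⬝ᵥ trRes r z A) := by
        rw [lintegral_add_left measurable_const, lintegral_const, measure_univ, mul_one,
          lintegral_tsum fun n => (hmeas n).aemeasurable]
        simp only [hμ.lintegral_comp_shift, tsum_rewardIfInside_mul_pathProb hP.1 hr]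
    _ = _ := by
        rw [← ENNReal.ofReal_tsum_of_nonneg hc0 hc.summable, hc.tsum_eq,
          ENNReal.ofReal_add (hr z) (hc.nonneg hc0)]

end MarkovChain

end MCTrunc

open MCTrunc in
theorem lower_bound_regenerative_numerator_general
    {S : Type*} [Countable S] [DecidableEq S]
    [MeasurableSpace S] [MeasurableSingletonClass S]
    (P : S → S → ℝ) (μ : S → MeasureTheory.Measure (ℕ → S)) (z : S) (A : Finset S)
    (hP : IsStochasticMatrix P)
    (hμ : IsMarkovChain P μ) (hzA : z ∈ A)
    (hsum : ∀ x y : ↥(A.erase z),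
      HasSum (fun j : ℕ => ((trB P z A) ^ j) x y) ((1 - trB P z A)⁻¹ x y))
    (r : S → ℝ) (hr : ∀ x, 0 ≤ r x) :
    (ENNReal.ofReal (r z + dotProduct
        (Matrix.vecMul (trNu P z A) (1 - trB P z A)⁻¹) (trRes r z A))
      = ∫⁻ ω, sumBefore r (min (retTime z ω) (hitTime ((A : Set S))ᶜ ω)) ω ∂ μ z) ∧
    ((∫⁻ ω, sumBefore r (min (retTime z ω) (hitTime ((A : Set S))ᶜ ω)) ω ∂ μ z)
      ≤ ∫⁻ ω, sumBefore r (retTime z ω) ω ∂ μ z) ∧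
    (ENNReal.ofReal (1 + dotProduct
        (Matrix.vecMul (trNu P z A) (1 - trB P z A)⁻¹) (trE z A))
      ≤ ∫⁻ ω, sumBefore (fun _ => 1) (retTime z ω) ω ∂ μ z) := by
  refine ⟨(lintegral_sumBefore_min_retTime_hitTime hP hμ hzA hsum hr).symm,
    lintegral_sumBefore_mono r (fun ω => min_le_left _ _) _, ?_⟩
  exact (lintegral_sumBefore_min_retTime_hitTime hP hμ hzA hsum fun _ => zero_le_one).symm.trans_le
    (lintegral_sumBefore_mono _ (fun ω => min_le_left _ _) _)

open MCTrunc in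
/-- lower bound for the regenerative numerator:
`κ̲(r) = r(z) + ν̃ (I - B̃)⁻¹ r̃ = E_z[∑_{j<τ(z)∧T} r(X_j)] ≤ E_z[∑_{j<τ(z)} r(X_j)]`,
and in particular `κ̲(e) = 1 + ν̃ (I - B̃)⁻¹ ẽ ≤ E_z[τ(z)]`. -/
theorem lower_bound_regenerative_numerator
    {S : Type*} [Countable S] [DecidableEq S]
    [MeasurableSpace S] [MeasurableSingletonClass S]
    (P : S → S → ℝ) (μ : S → MeasureTheory.Measure (ℕ → S)) (z : S) (A : Finset S)
    (hP : IsStochasticMatrix P) (hirr : IsIrreducibleMatrix P)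
    (hμ : IsMarkovChain P μ) (hpos : IsPositiveRecurrent μ) (hzA : z ∈ A)
    (hsum : ∀ x y : ↥(A.erase z),
      HasSum (fun j : ℕ => ((trB P z A) ^ j) x y) ((1 - trB P z A)⁻¹ x y))
    (r : S → ℝ) (hr : ∀ x, 0 ≤ r x) :
    (ENNReal.ofReal (r z + dotProduct
        (Matrix.vecMul (trNu P z A) (1 - trB P z A)⁻¹) (trRes r z A))
      = ∫⁻ ω, sumBefore r (min (retTime z ω) (hitTime ((A : Set S))ᶜ ω)) ω ∂ μ z) ∧
    ((∫⁻ ω, sumBefore r (min (retTime z ω) (hitTime ((A : Set S))ᶜ ω)) ω ∂ μ z)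
      ≤ ∫⁻ ω, sumBefore r (retTime z ω) ω ∂ μ z) ∧
    (ENNReal.ofReal (1 + dotProduct
        (Matrix.vecMul (trNu P z A) (1 - trB P z A)⁻¹) (trE z A))
      ≤ ∫⁻ ω, sumBefore (fun _ => 1) (retTime z ω) ω ∂ μ z) :=
  lower_bound_regenerative_numerator_general P μ z A hP hμ hzA hsum r hr
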